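/- If an edge update (a,b) (insertion or deletion) satisfies d_G(r,a) = d_G(r,b) for a landmark r, then no vertex is affected with respect to r by that single update; that is, for every vertex v, P_G(r,v) = P_{G'}(r,v), where G' is G with the single edge (a,b) inserted or deleted. -/

import Mathlib

open scoped Classical

variable {V : Type*}

namespace BatchHL

/-- `l` is a walk in `G` from `r` to `v`, given as its (nonempty) list of visited vertices. -/
def IsWalk (G : SimpleGraph V) (r v : V) (l : List V) : Prop :=
  l ≠ [] ∧ l.head? = some r ∧ l.getLast? = some v ∧ l.Chain' G.Adj

/-- The length (number of edges) of a walk given as a list of vertices. -/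
def len (l : List V) : ℕ := l.length - 1

/-- The walk `l` passes through the (undirected) edge `(a, b)`. -/
def Passes (l : List V) (a b : V) : Prop :=
  (a, b) ∈ l.zip l.tail ∨ (b, a) ∈ l.zip l.tail

/-- `P_G(r,v)`: the set of all shortest paths between `r` and `v` in `G`. -/
def SPaths (G : SimpleGraph V) (r v : V) : Set (List V) :=
  {l | IsWalk G r v l ∧ ∀ l', IsWalk G r v l' → l.length ≤ l'.length}

/-- `(a,b)` is an edge deleted by the batch update turning `G` into `G'`. -/
def DeletedEdge (G G' : SimpleGraph V) (a b : V) : Prop := G.Adj a b ∧ ¬ G'.Adj a b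

/-- `(a,b)` is an edge inserted by the batch update turning `G` into `G'`. -/
def InsertedEdge (G G' : SimpleGraph V) (a b : V) : Prop := G'.Adj a b ∧ ¬ G.Adj a b

/-- `(a,b)` is an edge of the batch update `B` turning `G` into `G'`. -/
def UpdatedEdge (G G' : SimpleGraph V) (a b : V) : Prop :=
  InsertedEdge G G' a b ∨ DeletedEdge G G' a b

/-- The walk `l` passes through a deleted edge. -/
def PassesDeleted (G G' : SimpleGraph V) (l : List V) : Prop :=
  ∃ a b, DeletedEdge G G' a b ∧ Passes l a b

/-- The walk `l` passes through an inserted edge. -/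
def PassesInserted (G G' : SimpleGraph V) (l : List V) : Prop :=
  ∃ a b, InsertedEdge G G' a b ∧ Passes l a b

/-- `v` is affected w.r.t. landmark `r` iff the set of shortest paths changes. -/
def Affected (G G' : SimpleGraph V) (r v : V) : Prop := SPaths G r v ≠ SPaths G' r v

/-- A composite path from `r` to `v`: a prefix lying in `G` followed by a suffix lying in `G'`. -/
def IsComposite (G G' : SimpleGraph V) (r v : V) (l : List V) : Prop :=
  ∃ w l₁ l₂, IsWalk G r w l₁ ∧ IsWalk G' w v l₂ ∧ l = l₁ ++ l₂.tail

/-- A significant composite path: a composite path whose `G`-prefix passes through a deleted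
edge and whose `G'`-suffix passes through an inserted edge. -/
def IsSigComposite (G G' : SimpleGraph V) (r v : V) (l : List V) : Prop :=
  ∃ w l₁ l₂, IsWalk G r w l₁ ∧ IsWalk G' w v l₂ ∧ l = l₁ ++ l₂.tail ∧
    PassesDeleted G G' l₁ ∧ PassesInserted G G' l₂

/-- `v` is composite-path affected w.r.t. `r`. -/
def CPAffected (G G' : SimpleGraph V) (r v : V) : Prop :=
  Affected G G' r v ∨ ∃ l, IsSigComposite G G' r v l ∧ (len l : ℕ∞) ≤ G.edist r v

/-- A distance labelling: each label entry `(r, δ) ∈ L v` satisfies `δ = d_G(r,v)`. -/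
def IsLabelling (G : SimpleGraph V) (L : V → Set (V × ℕ∞)) : Prop :=
  ∀ v r δ, (r, δ) ∈ L v → δ = G.edist r v

/-- A 2-hop cover labelling: a distance labelling such that every pair `s, t` has a common
hub `r` lying on a shortest path between `s` and `t`. -/
def Is2HopCover (G : SimpleGraph V) (L : V → Set (V × ℕ∞)) : Prop :=
  IsLabelling G L ∧ ∀ s t : V, ∃ r, (r, G.edist r s) ∈ L s ∧ (r, G.edist r t) ∈ L t ∧
    G.edist s r + G.edist r t = G.edist s t

/-- A highway cover labelling `Γ = (H, L)` over `G` with landmarks `R`.  The highway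
distances `δ_H(r,r_i)` are by definition the graph distances `d_G(r,r_i)`. -/
def IsHighwayCover (G : SimpleGraph V) (R : Set V) (L : V → Set (V × ℕ∞)) : Prop :=
  (∀ v r δ, (r, δ) ∈ L v → r ∈ R ∧ δ = G.edist r v) ∧
  ∀ v, v ∉ R → ∀ r ∈ R,
    G.edist r v = sInf {x | ∃ ri δ, (ri, δ) ∈ L v ∧ x = δ + G.edist r ri}

/-- The landmark length / landmark distance values: `⊤` for "no path", otherwise a pair of a
length and a landmark flag (a `Prop`). -/
abbrev LLen := WithTop (ℕ × Prop)

/-- Lexicographic order on landmark lengths, with flag ordering `True < False`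
(i.e. `x ≤ y` at equal length iff `y`'s flag implies `x`'s flag). -/
def llLe : LLen → LLen → Prop
  | _, none => True
  | none, some _ => False
  | some a, some b => a.1 < b.1 ∨ (a.1 = b.1 ∧ (b.2 → a.2))

/-- Strict lexicographic order on landmark lengths. -/
def llLt (x y : LLen) : Prop := llLe x y ∧ ¬ llLe y x

/-- The extension operator `⊕`: `(d,l) ⊕ w = (d+1, True)` if `w ∈ R∖{r}`, else `(d+1, l)`. -/
def oplus (R : Set V) (r : V) : LLen → V → LLen
  | none, _ => none
  | some a, w => some (a.1 + 1, (w ∈ R ∧ w ≠ r) ∨ a.2)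

/-- The landmark length `lml(l)` of a walk `l` starting at `r`: its length together with the
flag recording whether it passes through a landmark other than `r`. -/
def lmLen (R : Set V) (r : V) (l : List V) : LLen :=
  some (len l, ∃ w ∈ l, w ∈ R ∧ w ≠ r)

/-- The landmark distance `d^L_G(r,v)`: the lexicographically minimal landmark length of a
walk from `r` to `v` (with `True < False` on flags), `⊤` if there is none.  Explicitly, its
length component is the minimal walk length and its flag holds iff some walk of minimal
length passes through a landmark other than `r`. -/
noncomputable def lmDist (G : SimpleGraph V) (R : Set V) (r v : V) : LLen :=
  if ∃ l, IsWalk G r v l then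
    some (sInf {n | ∃ l, IsWalk G r v l ∧ len l = n},
      ∃ l, IsWalk G r v l ∧ len l = sInf {n | ∃ l', IsWalk G r v l' ∧ len l' = n} ∧
        ∃ w ∈ l, w ∈ R ∧ w ≠ r)
  else ⊤

/-- Order on extended landmark lengths `(landmark length, deletion flag)`, lexicographic with
`True < False` on the deletion flag. -/
def ellLe (x y : LLen × Prop) : Prop := llLt x.1 y.1 ∨ (x.1 = y.1 ∧ (y.2 → x.2))

/-- Strict order on extended landmark lengths. -/
def ellLt (x y : LLen × Prop) : Prop := ellLe x y ∧ ¬ ellLe y x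

/-- `β(r,v) = (d^L_G(r,v), True)`. -/
noncomputable def beta (G : SimpleGraph V) (R : Set V) (r v : V) : LLen × Prop :=
  (lmDist G R r v, True)

/-- The distance bound `d_bou(u, S)` of `u` w.r.t. `S` in `G'`. -/
noncomputable def dbou (G' : SimpleGraph V) (r : V) (S : Set V) (u : V) : ℕ∞ :=
  ⨅ (w : V) (_ : G'.Adj u w ∧ w ∉ S), (G'.edist r w + 1)

/-- The set `{ d^L_{G'}(r,w) ⊕ v | w ∈ N_{G'}(v) ∖ S }`, whose lexicographic minimum is the
landmark distance bound `d^L_bou(v,S)`. -/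
noncomputable def lmBouSet (G' : SimpleGraph V) (R : Set V) (r v : V) (S : Set V) :
    Set LLen :=
  {x | ∃ w, G'.Adj v w ∧ w ∉ S ∧ x = oplus R r (lmDist G' R r w) v}

/-- The subgraph `G[V ∖ R]` obtained by removing all landmarks (landmarks become isolated). -/
def removeLandmarks (G : SimpleGraph V) (R : Set V) : SimpleGraph V where
  Adj u w := G.Adj u w ∧ u ∉ R ∧ w ∉ R
  symm := ⟨fun u w ⟨h, hu, hw⟩ => ⟨h.symm, hw, hu⟩⟩
  loopless := ⟨fun u ⟨h, _, _⟩ => G.irrefl h⟩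

end BatchHL

/-! Since `a` and `b` are equidistant from `r`, the function `d_G(r, ·)` grows by at most one
along every edge of `G'`, so `d_G(r, ·) ≤ d_{G'}(r, ·)`. Conversely, every step of a shortest walk
of `G` from `r` moves one unit further from `r`, so such a walk never uses `{a, b}` and is also a
walk of `G'`. Hence `d_G(r, ·) = d_{G'}(r, ·)` and shortest walks of `G` are shortest in `G'`;
as the hypotheses are symmetric in `G` and `G'`, the two sets of shortest paths coincide. -/

namespace SimpleGraph

variable {G : SimpleGraph V}

theorem Walk.le_add_length {f : V → ℕ∞}
    (hf : ∀ x y, G.Adj x y → f y ≤ f x + 1) {u v : V} (p : G.Walk u v) :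
    f v ≤ f u + p.length := by
  induction p with
  | nil => simp
  | @cons x y _ h q ih =>
    calc f _ ≤ f y + q.length := ih
      _ ≤ f x + 1 + q.length := by gcongr; exact hf x y h
      _ = f x + (cons h q).length := by rw [Walk.length_cons]; push_cast; ring

theorem le_add_edist {f : V → ℕ∞}
    (hf : ∀ x y, G.Adj x y → f y ≤ f x + 1) (u v : V) :
    f v ≤ f u + G.edist u v := by
  by_cases htop : G.edist u v = ⊤
  · simp [htop]
  · obtain ⟨p, hp⟩ := exists_walk_of_edist_ne_top htop
    exact hp ▸ p.le_add_length hf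

theorem Walk.length_tail_eq_edist {u w v : V} {h : G.Adj u w}
    {q : G.Walk w v} (hp : ((cons h q).length : ℕ∞) = G.edist u v) :
    (q.length : ℕ∞) = G.edist w v ∧ G.edist u v = G.edist w v + 1 := by
  have hq : G.edist w v ≤ q.length := q.edist_le
  have hstep : G.edist u v ≤ G.edist w v + 1 := by
    calc G.edist u v ≤ G.edist u w + G.edist w v := G.edist_triangle
      _ = G.edist w v + 1 := by rw [edist_eq_one_iff_adj.2 h, add_comm]
  lift G.edist w v to ℕ using ne_top_of_le_ne_top (ENat.natCast_ne_top _) hq with n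
  rw [← hp, Walk.length_cons] at hstep ⊢
  norm_cast at hq hstep ⊢
  omega

/-- Along a shortest walk the distance to the endpoint drops by one at every step. -/
theorem Walk.edist_target_ne_of_mem_edges {u v x y : V} (p : G.Walk u v)
    (hp : (p.length : ℕ∞) = G.edist u v) (he : s(x, y) ∈ p.edges) :
    G.edist x v ≠ G.edist y v := by
  induction p with
  | nil => simp at he
  | @cons u w v h q ih =>
    obtain ⟨hq, hstep⟩ := Walk.length_tail_eq_edist hp
    rw [Walk.edges_cons, List.mem_cons] at he
    rcases he with he | he
    · have hne : G.edist u v ≠ G.edist w v := by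
        rw [hstep]
        lift G.edist w v to ℕ using ne_top_of_le_ne_top (ENat.natCast_ne_top _) q.edist_le with n
        norm_cast; omega
      rcases Sym2.eq_iff.1 he with ⟨rfl, rfl⟩ | ⟨rfl, rfl⟩
      · exact hne
      · exact hne.symm
    · exact ih hq he

theorem Walk.edist_source_ne_of_mem_edges {u v x y : V} (p : G.Walk u v)
    (hp : (p.length : ℕ∞) = G.edist u v) (he : s(x, y) ∈ p.edges) :
    G.edist u x ≠ G.edist u y := by
  rw [edist_comm, G.edist_comm (u := u)]
  refine p.reverse.edist_target_ne_of_mem_edges ?_ (by simpa using he)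
  rw [Walk.length_reverse, hp, edist_comm]

end SimpleGraph

namespace BatchHL

open SimpleGraph

theorem isWalk_iff_exists_walk {G : SimpleGraph V} {r v : V} {l : List V} :
    IsWalk G r v l ↔ ∃ p : G.Walk r v, p.support = l := by
  constructor
  · rintro ⟨hne, hhead, hlast, hchain⟩
    replace hchain : l.IsChain G.Adj := hchain
    have hr : l.head hne = r := by rwa [List.head?_eq_some_head hne, Option.some_inj] at hhead
    have hv : l.getLast hne = v := by
      rwa [List.getLast?_eq_some_getLast hne, Option.some_inj] at hlast
    exact ⟨(Walk.ofSupport l hne hchain).copy hr hv,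
      by rw [Walk.support_copy, Walk.support_ofSupport]⟩
  · rintro ⟨p, rfl⟩
    refine ⟨p.support_ne_nil, ?_, ?_, p.isChain_adj_support⟩
    · rw [List.head?_eq_some_head p.support_ne_nil, p.head_support]
    · rw [List.getLast?_eq_some_getLast p.support_ne_nil, p.getLast_support]

theorem mem_sPaths_iff {G : SimpleGraph V} {r v : V} {l : List V} :
    l ∈ SPaths G r v ↔ ∃ p : G.Walk r v, p.support = l ∧ (p.length : ℕ∞) = G.edist r v := by
  simp only [SPaths, Set.mem_ofPred_eq, isWalk_iff_exists_walk]
  constructor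
  · rintro ⟨⟨p, rfl⟩, hmin⟩
    obtain ⟨q, hq⟩ :=
      exists_walk_of_edist_ne_top (ne_top_of_le_ne_top (ENat.natCast_ne_top _) p.edist_le)
    refine ⟨p, rfl, le_antisymm ?_ p.edist_le⟩
    have := hmin _ ⟨q, rfl⟩
    rw [Walk.length_support, Walk.length_support] at this
    rw [← hq]
    exact_mod_cast Nat.le_of_add_le_add_right this
  · rintro ⟨p, rfl, hp⟩
    refine ⟨⟨p, rfl⟩, ?_⟩
    rintro _ ⟨q, rfl⟩
    have : (p.length : ℕ∞) ≤ q.length := hp ▸ q.edist_le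
    rw [Walk.length_support, Walk.length_support]
    exact Nat.add_le_add_right (mod_cast this) 1

theorem edist_eq_of_pair_eq {G : SimpleGraph V} {r a b x y : V}
    (heq : G.edist r a = G.edist r b) (hxy : ({x, y} : Set V) = {a, b}) :
    G.edist r x = G.edist r y := by
  have hx : x ∈ ({a, b} : Set V) := hxy ▸ Set.mem_insert x {y}
  have hy : y ∈ ({a, b} : Set V) := hxy ▸ Set.mem_insert_of_mem x rfl
  rcases hx with rfl | rfl <;> rcases hy with rfl | rfl <;> simp [heq]

def EqOffEdge (G G' : SimpleGraph V) (a b : V) : Prop :=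
  ∀ u w, (G'.Adj u w ↔ G.Adj u w) ∨ ({u, w} : Set V) = {a, b}

namespace EqOffEdge

variable {G G' : SimpleGraph V} {r a b : V}

theorem symm (h : EqOffEdge G G' a b) : EqOffEdge G' G a b :=
  fun u w => (h u w).imp Iff.symm id

theorem adj_of_edist_ne (h : EqOffEdge G G' a b) (heq : G.edist r a = G.edist r b) {x y : V}
    (hxy : G.Adj x y) (hne : G.edist r x ≠ G.edist r y) : G'.Adj x y :=
  (h x y).elim (·.2 hxy) fun hpair => absurd (edist_eq_of_pair_eq heq hpair) hne

theorem edist_le (h : EqOffEdge G G' a b) (heq : G.edist r a = G.edist r b) (v : V) :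
    G.edist r v ≤ G'.edist r v := by
  have hlip : ∀ x y, G'.Adj x y → G.edist r y ≤ G.edist r x + 1 := by
    intro x y hxy
    rcases h x y with hiff | hpair
    · calc G.edist r y ≤ G.edist r x + G.edist x y := G.edist_triangle
        _ = G.edist r x + 1 := by rw [edist_eq_one_iff_adj.2 (hiff.1 hxy)]
    · exact (edist_eq_of_pair_eq heq hpair).ge.trans le_self_add
  simpa using le_add_edist hlip r v

/-- A shortest walk from `r` never uses the edge `{a, b}`, whose ends are equidistant from `r`. -/
theorem exists_walk_support_eq (h : EqOffEdge G G' a b) (heq : G.edist r a = G.edist r b)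
    {v : V} (p : G.Walk r v) (hp : (p.length : ℕ∞) = G.edist r v) :
    ∃ p' : G'.Walk r v, p'.support = p.support ∧ p'.length = p.length := by
  have hedges : ∀ e ∈ p.edges, e ∈ G'.edgeSet := by
    rintro ⟨x, y⟩ he
    exact h.adj_of_edist_ne heq (p.adj_of_mem_edges he) (p.edist_source_ne_of_mem_edges hp he)
  exact ⟨p.transfer G' hedges, p.support_transfer hedges, p.length_transfer hedges⟩

theorem edist_eq (h : EqOffEdge G G' a b) (heq : G.edist r a = G.edist r b) (v : V) :
    G'.edist r v = G.edist r v := by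
  refine le_antisymm ?_ (h.edist_le heq v)
  by_cases htop : G.edist r v = ⊤
  · simp [htop]
  obtain ⟨p, hp⟩ := exists_walk_of_edist_ne_top htop
  obtain ⟨p', -, hlen⟩ := h.exists_walk_support_eq heq p hp
  rw [← hp, ← hlen]
  exact p'.edist_le

theorem sPaths_subset (h : EqOffEdge G G' a b) (heq : G.edist r a = G.edist r b) (v : V) :
    SPaths G r v ⊆ SPaths G' r v := by
  intro l hl
  obtain ⟨p, rfl, hp⟩ := mem_sPaths_iff.1 hl
  obtain ⟨p', hsupp, hlen⟩ := h.exists_walk_support_eq heq p hp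
  exact mem_sPaths_iff.2 ⟨p', hsupp, by rw [hlen, hp, h.edist_eq heq]⟩

end EqOffEdge

/-- If a single edge update `(a,b)` (insertion or deletion) satisfies
`d_G(r,a) = d_G(r,b)`, then no vertex is affected w.r.t. `r`: `P_G(r,v) = P_{G'}(r,v)` for
every `v`.  Here `G'` differs from `G` at most on the single edge `{a,b}`. -/
theorem trivial_update (G G' : SimpleGraph V) (r a b : V)
    (hupd : ∀ u w, (G'.Adj u w ↔ G.Adj u w) ∨ ({u, w} : Set V) = {a, b})
    (heq : G.edist r a = G.edist r b) :
    ∀ v, SPaths G r v = SPaths G' r v := by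
  have h : EqOffEdge G G' a b := hupd
  have heq' : G'.edist r a = G'.edist r b := by rw [h.edist_eq heq, h.edist_eq heq, heq]
  exact fun v => (h.sPaths_subset heq v).antisymm (h.symm.sPaths_subset heq' v)

end BatchHL
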